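/- arXiv:2203.01109 — 3 statements merged into one kernel-verified Lean document; each statement's English description precedes it below -/
import Mathlib

section
/- Let N ≥ 2 and let a_1, …, a_N be vectors in a complex inner product space E with norm ‖·‖ induced by the inner product. Then (1/(2N − 2)) · [ (2/(N(N − 1))) · (∑_{1 ≤ i < j ≤ N} ‖a_i − a_j‖)² + ∑_{1 ≤ i < j ≤ N} ‖a_i + a_j‖² ] ≥ (1/N) · ‖∑_{i=1}^N a_i‖² + (2/(N²(N − 1))) · (∑_{1 ≤ i < j ≤ N} ‖a_i − a_j‖)². (Hence the lower bound of Theorem 1 is always at least as large as the lower bound of Ren et al.) -/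
/-!
Summing the expansions `‖a i ± a j‖² = ‖a i‖² ± 2 re ⟪a i, a j⟫ + ‖a j‖²` over the pairs `i < j`
gives, with `U = ∑ ‖a i‖²` and `M = ‖∑ a i‖²`,
`∑_{i<j} ‖a i - a j‖² = N U - M` and `∑_{i<j} ‖a i + a j‖² = (N - 2) U + M`.
In these terms the difference of the two sides is `(N - 2) / (N² (N - 1)²)` times the
Cauchy–Schwarz defect `(N (N - 1) / 2) ∑_{i<j} ‖a i - a j‖² - (∑_{i<j} ‖a i - a j‖)²`,
which is nonnegative.
-/

open Finset RCLike

section Pairs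

variable {ι M : Type*} [Fintype ι] [LinearOrder ι]

theorem sum_filter_lt_add_swap_add_sum_diag [AddCommMonoid M] (f : ι → ι → M) :
    ∑ p ∈ univ.filter (fun p : ι × ι => p.1 < p.2), (f p.1 p.2 + f p.2 p.1) + ∑ i, f i i =
      ∑ i, ∑ j, f i j := by
  have swap : ∑ p ∈ univ.filter (fun p : ι × ι => p.1 < p.2), f p.2 p.1 =
      ∑ p ∈ univ.filter (fun p : ι × ι => p.2 < p.1), f p.1 p.2 :=
    sum_equiv (Equiv.prodComm ι ι) (by simp) (by simp)
  have diag : ∑ p ∈ univ.filter (fun p : ι × ι => p.1 = p.2), f p.1 p.2 = ∑ i, f i i := by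
    simp [sum_filter, Fintype.sum_prod_type]
  rw [sum_add_distrib, swap, ← diag, ← Fintype.sum_prod_type', ← sum_union, ← sum_union]
  · congr; ext p; simp only [mem_union, mem_filter, mem_univ, true_and, iff_true]; grind
  all_goals grind [disjoint_left]

end Pairs

section InnerProduct

variable {E ι : Type*} [NormedAddCommGroup E] [Fintype ι]

theorem norm_sum_sq_eq_sum_sum_re_inner (𝕜 : Type*) [RCLike 𝕜] [InnerProductSpace 𝕜 E]
    (a : ι → E) : ‖∑ i, a i‖ ^ 2 = ∑ i, ∑ j, re (inner 𝕜 (a i) (a j)) := by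
  rw [← inner_self_eq_norm_sq (𝕜 := 𝕜), sum_inner, map_sum]
  simp_rw [inner_sum, map_sum]

variable [LinearOrder ι]

theorem sum_filter_lt_norm_sub_sq (𝕜 : Type*) [RCLike 𝕜] [InnerProductSpace 𝕜 E] (a : ι → E) :
    ∑ p ∈ univ.filter (fun p : ι × ι => p.1 < p.2), ‖a p.1 - a p.2‖ ^ 2 =
      Fintype.card ι * ∑ i, ‖a i‖ ^ 2 - ‖∑ i, a i‖ ^ 2 := by
  set f : ι → ι → ℝ := fun i j => ‖a i‖ ^ 2 - re (inner 𝕜 (a i) (a j))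
  calc ∑ p ∈ univ.filter (fun p : ι × ι => p.1 < p.2), ‖a p.1 - a p.2‖ ^ 2
      = ∑ p ∈ univ.filter (fun p : ι × ι => p.1 < p.2), (f p.1 p.2 + f p.2 p.1) :=
        sum_congr rfl fun p _ => by
          simp only [f]
          rw [norm_sub_sq (𝕜 := 𝕜), inner_re_symm (𝕜 := 𝕜) (a p.2) (a p.1)]; ring
    _ = ∑ i, ∑ j, f i j - ∑ i, f i i := eq_sub_of_add_eq (sum_filter_lt_add_swap_add_sum_diag f)
    _ = Fintype.card ι * ∑ i, ‖a i‖ ^ 2 - ‖∑ i, a i‖ ^ 2 := by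
      simp only [f, sum_sub_distrib, sum_const, card_univ, nsmul_eq_mul, ← mul_sum,
        inner_self_eq_norm_sq, norm_sum_sq_eq_sum_sum_re_inner 𝕜]
      ring

theorem sum_filter_lt_norm_add_sq (𝕜 : Type*) [RCLike 𝕜] [InnerProductSpace 𝕜 E] (a : ι → E) :
    ∑ p ∈ univ.filter (fun p : ι × ι => p.1 < p.2), ‖a p.1 + a p.2‖ ^ 2 =
      (Fintype.card ι - 2) * ∑ i, ‖a i‖ ^ 2 + ‖∑ i, a i‖ ^ 2 := by
  set f : ι → ι → ℝ := fun i j => ‖a i‖ ^ 2 + re (inner 𝕜 (a i) (a j))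
  calc ∑ p ∈ univ.filter (fun p : ι × ι => p.1 < p.2), ‖a p.1 + a p.2‖ ^ 2
      = ∑ p ∈ univ.filter (fun p : ι × ι => p.1 < p.2), (f p.1 p.2 + f p.2 p.1) :=
        sum_congr rfl fun p _ => by
          simp only [f]
          rw [norm_add_sq (𝕜 := 𝕜), inner_re_symm (𝕜 := 𝕜) (a p.2) (a p.1)]; ring
    _ = ∑ i, ∑ j, f i j - ∑ i, f i i := eq_sub_of_add_eq (sum_filter_lt_add_swap_add_sum_diag f)
    _ = (Fintype.card ι - 2) * ∑ i, ‖a i‖ ^ 2 + ‖∑ i, a i‖ ^ 2 := by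
      simp only [f, sum_add_distrib, sum_const, card_univ, nsmul_eq_mul, ← mul_sum,
        inner_self_eq_norm_sq, norm_sum_sq_eq_sum_sum_re_inner 𝕜]
      ring

end InnerProduct

open Finset in
theorem bound_comparison {E : Type*} [NormedAddCommGroup E] [InnerProductSpace ℂ E]
    (N : ℕ) (hN : 2 ≤ N) (a : Fin N → E) :
    (1 / (2 * (N : ℝ) - 2)) *
        ((2 / ((N : ℝ) * ((N : ℝ) - 1))) *
            (∑ p ∈ univ.filter (fun p : Fin N × Fin N => p.1 < p.2), ‖a p.1 - a p.2‖) ^ 2 +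
          ∑ p ∈ univ.filter (fun p : Fin N × Fin N => p.1 < p.2), ‖a p.1 + a p.2‖ ^ 2) ≥
      (1 / (N : ℝ)) * ‖∑ i, a i‖ ^ 2 +
        (2 / ((N : ℝ) ^ 2 * ((N : ℝ) - 1))) *
          (∑ p ∈ univ.filter (fun p : Fin N × Fin N => p.1 < p.2), ‖a p.1 - a p.2‖) ^ 2 := by
  have cauchy_schwarz := sq_sum_le_card_mul_sum_sq
    (s := univ.filter (fun p : Fin N × Fin N => p.1 < p.2)) (f := fun p => ‖a p.1 - a p.2‖)
  rw [Fintype.card_product_filter_lt, Nat.cast_choose_two, sum_filter_lt_norm_sub_sq ℂ,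
    Fintype.card_fin] at cauchy_schwarz
  rw [sum_filter_lt_norm_add_sq ℂ, Fintype.card_fin]
  set S := ∑ p ∈ univ.filter (fun p : Fin N × Fin N => p.1 < p.2), ‖a p.1 - a p.2‖
  set U := ∑ i, ‖a i‖ ^ 2
  set M := ‖∑ i, a i‖ ^ 2
  have hn : (2 : ℝ) ≤ N := by exact_mod_cast hN
  have defect_nonneg :
      0 ≤ (N - 2) / (N ^ 2 * (N - 1) ^ 2) * (N * (N - 1) / 2 * (N * U - M) - S ^ 2) :=
    mul_nonneg (div_nonneg (by linarith) (by positivity)) (by linarith)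
  rw [ge_iff_le, ← sub_nonneg]
  convert defect_nonneg using 1
  field_simp [show (N : ℝ) - 1 ≠ 0 by linarith, show (N : ℝ) ≠ 0 by linarith]
  ring
end

section
/- Let ρ be a d×d complex positive semidefinite matrix with trace 1, let 0 < α < 1, and let A_1, …, A_N (N ≥ 2) be d×d Hermitian matrices. Then for each x ∈ {0, 1}: ∑_{i=1}^N I^α_ρ(A_i) ≥ (1/(2N − 2)) · [ (2/(N(N − 1))) · (∑_{1 ≤ i < j ≤ N} √(I^α_ρ(A_i + (−1)^x A_j)))² + ∑_{1 ≤ i < j ≤ N} I^α_ρ(A_i + (−1)^{x+1} A_j) ], where √ denotes the real square root. -/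
open Matrix Finset
open scoped ComplexOrder

/-- `ρ^α` via the continuous functional calculus applied to `t ↦ t ^ α`. -/
noncomputable def mpow {d : ℕ} (ρ : Matrix (Fin d) (Fin d) ℂ) (α : ℝ) :
    Matrix (Fin d) (Fin d) ℂ :=
  cfc (fun t : ℝ => t ^ α) ρ

/-- The Wigner–Yanase–Dyson skew information
`I^α_ρ(A) = −(1/2) Tr([ρ^α, A] [ρ^{1−α}, A])` of an observable `A`. -/
noncomputable def wydObs {d : ℕ} (ρ : Matrix (Fin d) (Fin d) ℂ) (α : ℝ)
    (A : Matrix (Fin d) (Fin d) ℂ) : ℝ :=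
  (-(1 / 2 : ℂ) *
    ((mpow ρ α * A - A * mpow ρ α) * (mpow ρ (1 - α) * A - A * mpow ρ (1 - α))).trace).re

/-! Diagonalising `ρ = ∑ λₖ |k⟩⟨k|` gives
`I^α_ρ(A) = ½ ∑_{k,l} (λₖ^α - λₗ^α)(λₖ^{1-α} - λₗ^{1-α}) |⟨k|A|l⟩|²`, a positive semidefinite
quadratic form on Hermitian matrices. Hence it obeys the parallelogram law
`I(A + sB) + I(A - sB) = 2 I(A) + 2 I(B)` for `s = ±1`; summed over the pairs `i < j` this gives
`∑_{i<j} [I(Aᵢ + sAⱼ) + I(Aᵢ - sAⱼ)] = 2(N - 1) ∑ᵢ I(Aᵢ)`, and Cauchy–Schwarz over the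
`N(N - 1)/2` pairs bounds `∑_{i<j} I(Aᵢ + sAⱼ)` below by `2/(N(N - 1)) (∑_{i<j} √I(Aᵢ + sAⱼ))²`. -/

namespace Matrix

variable {n R : Type*} [Fintype n] [DecidableEq n]

lemma trace_conjStarAlgAut [CommRing R] [StarRing R] (U : unitary (Matrix n n R))
    (M : Matrix n n R) : trace (Unitary.conjStarAlgAut R _ U M) = trace M := by
  rw [Unitary.conjStarAlgAut_apply, trace_mul_cycle, Unitary.coe_star_mul_self, one_mul]

lemma commutator_diagonal_apply [CommRing R] (a : n → R) (B : Matrix n n R) (k l : n) :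
    (diagonal a * B - B * diagonal a) k l = (a k - a l) * B k l := by
  simp only [sub_apply, diagonal_mul, mul_diagonal]
  ring

lemma trace_commutator_diagonal_mul_commutator_diagonal [CommRing R] (a b : n → R)
    (B : Matrix n n R) :
    trace ((diagonal a * B - B * diagonal a) * (diagonal b * B - B * diagonal b)) =
      ∑ k, ∑ l, (a k - a l) * (b l - b k) * (B k l * B l k) := by
  simp only [trace, diag_apply, mul_apply, commutator_diagonal_apply]
  exact Fintype.sum_congr _ _ fun k => Fintype.sum_congr _ _ fun l => by ring

end Matrix

lemma wydObs_eq_sum_normSq {d : ℕ} {ρ X : Matrix (Fin d) (Fin d) ℂ} (hρ : ρ.IsHermitian)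
    (hX : X.IsHermitian) (α : ℝ) :
    wydObs ρ α X = ∑ k, ∑ l,
      (hρ.eigenvalues k ^ α - hρ.eigenvalues l ^ α) *
        (hρ.eigenvalues k ^ (1 - α) - hρ.eigenvalues l ^ (1 - α)) *
        Complex.normSq ((star (hρ.eigenvectorUnitary : Matrix (Fin d) (Fin d) ℂ) * X *
          hρ.eigenvectorUnitary) k l) / 2 := by
  set φ := Unitary.conjStarAlgAut ℂ (Matrix (Fin d) (Fin d) ℂ) hρ.eigenvectorUnitary
  set B := φ.symm X
  have hXB : X = φ B := (φ.apply_symm_apply X).symm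
  have hB : B.IsHermitian := by
    unfold IsHermitian
    rw [← star_eq_conjTranspose, ← map_star, hX.star_eq]
  have hcomm : ∀ D, φ D * X - X * φ D = φ (D * B - B * D) := fun D => by
    rw [hXB, map_sub, map_mul, map_mul]
  have hmpow : ∀ β, mpow ρ β = φ (diagonal fun k => ((hρ.eigenvalues k ^ β : ℝ) : ℂ)) :=
    fun β => by rw [mpow, hρ.cfc_eq]; rfl
  rw [wydObs, hmpow, hmpow, hcomm, hcomm, ← map_mul, trace_conjStarAlgAut,
    trace_commutator_diagonal_mul_commutator_diagonal, Finset.mul_sum, Complex.re_sum]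
  refine Fintype.sum_congr _ _ fun k => ?_
  rw [Finset.mul_sum, Complex.re_sum]
  refine Fintype.sum_congr _ _ fun l => ?_
  rw [← hB.apply l k, Complex.star_def, Complex.mul_conj]
  change _ = _ * _ * Complex.normSq (B k l) / 2
  rw [← Complex.ofReal_ofNat, ← Complex.ofReal_one, ← Complex.ofReal_div, ← Complex.ofReal_neg]
  norm_cast
  ring

lemma wydObs_nonneg {d : ℕ} {ρ X : Matrix (Fin d) (Fin d) ℂ} (hρ : ρ.PosSemidef) {α : ℝ}
    (hα0 : 0 ≤ α) (hα1 : α ≤ 1) (hX : X.IsHermitian) : 0 ≤ wydObs ρ α X := by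
  have hmonovary : MonovaryOn (fun t : ℝ => t ^ α) (fun t => t ^ (1 - α)) (Set.Ici 0) :=
    (Real.monotoneOn_rpow_Ici_of_exponent_nonneg hα0).monovaryOn
      (Real.monotoneOn_rpow_Ici_of_exponent_nonneg (sub_nonneg.2 hα1))
  rw [wydObs_eq_sum_normSq hρ.isHermitian hX]
  refine sum_nonneg fun k _ => sum_nonneg fun l _ => div_nonneg (mul_nonneg ?_ ?_) zero_le_two
  · exact hmonovary.sub_mul_sub_nonneg (hρ.eigenvalues_nonneg l) (hρ.eigenvalues_nonneg k)
  · exact Complex.normSq_nonneg _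

lemma wydObs_smul_of_sq_eq_one {d : ℕ} (ρ : Matrix (Fin d) (Fin d) ℂ) (α : ℝ) {c : ℂ}
    (hc : c ^ 2 = 1) (Y : Matrix (Fin d) (Fin d) ℂ) : wydObs ρ α (c • Y) = wydObs ρ α Y := by
  simp only [wydObs, mul_smul_comm, smul_mul_assoc, ← smul_sub, smul_smul, ← sq, hc,
    one_smul]

lemma wydObs_add_add_wydObs_sub {d : ℕ} (ρ : Matrix (Fin d) (Fin d) ℂ) (α : ℝ)
    (X Y : Matrix (Fin d) (Fin d) ℂ) :
    wydObs ρ α (X + Y) + wydObs ρ α (X - Y) = 2 * wydObs ρ α X + 2 * wydObs ρ α Y := by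
  have hre (z : ℂ) : (2 * z).re = 2 * z.re := by simp
  simp only [wydObs, ← Complex.add_re, ← hre]
  congr 1
  simp only [mul_add, add_mul, mul_sub, sub_mul, trace_add, trace_sub, Matrix.mul_assoc]
  ring

lemma sum_filter_lt_add {ι R : Type*} [Fintype ι] [LinearOrder ι] [CommRing R] (f : ι → R) :
    ∑ p ∈ univ.filter (fun p : ι × ι => p.1 < p.2), (f p.1 + f p.2) =
      (Fintype.card ι - 1) * ∑ i, f i := by
  calc _ = ∑ i, ∑ j, ((if i < j then f i else 0) + if i < j then f j else 0) := by
        rw [sum_filter, Fintype.sum_prod_type]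
        exact Fintype.sum_congr _ _ fun i => Fintype.sum_congr _ _ fun j => by split_ifs <;> simp
    _ = ∑ i, ∑ j, ((if i < j then f i else 0) + if j < i then f i else 0) := by
        simp only [sum_add_distrib]
        rw [sum_comm (f := fun i j => if i < j then f j else 0)]
    _ = ∑ i, ∑ j, (f i - if i = j then f i else 0) := by
        refine Fintype.sum_congr _ _ fun i => Fintype.sum_congr _ _ fun j => ?_
        rcases lt_trichotomy i j with h | rfl | h
        · simp [h, h.ne, h.not_gt]
        · simp
        · simp [h, h.ne', h.not_gt]
    _ = _ := by simp [sum_sub_distrib, mul_sum, sub_mul]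

lemma sum_le_of_add_eq_two_mul_add {ι : Type*} [Fintype ι] [LinearOrder ι]
    (hι : 2 ≤ Fintype.card ι) (q : ι → ℝ) (t u : ι × ι → ℝ)
    (ht : ∀ p ∈ univ.filter (fun p : ι × ι => p.1 < p.2), 0 ≤ t p)
    (htu : ∀ p ∈ univ.filter (fun p : ι × ι => p.1 < p.2), t p + u p = 2 * q p.1 + 2 * q p.2) :
    (1 / (2 * (Fintype.card ι : ℝ) - 2)) *
        ((2 / ((Fintype.card ι : ℝ) * ((Fintype.card ι : ℝ) - 1))) *
            (∑ p ∈ univ.filter (fun p : ι × ι => p.1 < p.2), Real.sqrt (t p)) ^ 2 +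
          ∑ p ∈ univ.filter (fun p : ι × ι => p.1 < p.2), u p) ≤ ∑ i, q i := by
  set N : ℝ := (Fintype.card ι : ℝ)
  set P := univ.filter (fun p : ι × ι => p.1 < p.2)
  have hN : (2 : ℝ) ≤ N := Nat.ofNat_le_cast.mpr hι
  have hcard : (#P : ℝ) = N * (N - 1) / 2 := by
    rw [Fintype.card_product_filter_lt, Nat.cast_choose_two]
  have hcauchy : (∑ p ∈ P, Real.sqrt (t p)) ^ 2 ≤ #P * ∑ p ∈ P, t p := by
    refine (sq_sum_le_card_mul_sum_sq).trans_eq ?_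
    rw [sum_congr rfl fun p hp => Real.sq_sqrt (ht p hp)]
  have hsum : ∑ p ∈ P, t p + ∑ p ∈ P, u p = (2 * N - 2) * ∑ i, q i := by
    rw [← sum_add_distrib, sum_congr rfl htu]
    simp only [← mul_add, ← mul_sum]
    rw [sum_filter_lt_add]
    ring
  rw [one_div, inv_mul_le_iff₀ (by linarith), ← hsum, add_le_add_iff_right,
    div_mul_eq_mul_div, div_le_iff₀ (by nlinarith)]
  rw [hcard] at hcauchy
  linarith

theorem wyd_skew_information_uncertainty_general (d N : ℕ) (hN : 2 ≤ N)
    (ρ : Matrix (Fin d) (Fin d) ℂ) (hρ : ρ.PosSemidef)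
    (α : ℝ) (hα0 : 0 < α) (hα1 : α < 1)
    (A : Fin N → Matrix (Fin d) (Fin d) ℂ) (hA : ∀ i, (A i).IsHermitian) :
    ∀ x ∈ ({0, 1} : Set ℕ),
      ∑ i, wydObs ρ α (A i) ≥
        (1 / (2 * (N : ℝ) - 2)) *
          ((2 / ((N : ℝ) * ((N : ℝ) - 1))) *
              (∑ p ∈ univ.filter (fun p : Fin N × Fin N => p.1 < p.2),
                Real.sqrt (wydObs ρ α (A p.1 + ((-1 : ℂ) ^ x) • A p.2))) ^ 2 +
            ∑ p ∈ univ.filter (fun p : Fin N × Fin N => p.1 < p.2),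
              wydObs ρ α (A p.1 + ((-1 : ℂ) ^ (x + 1)) • A p.2)) := by
  intro x _
  simp only [pow_succ (-1 : ℂ) x, mul_neg_one, neg_smul, ← sub_eq_add_neg]
  set c : ℂ := (-1) ^ x
  have hc : c ^ 2 = 1 := by rw [← pow_mul, mul_comm, pow_mul, neg_one_sq, one_pow]
  have hc_self : IsSelfAdjoint c := (IsSelfAdjoint.one ℂ).neg.pow x
  simpa only [Fintype.card_fin] using
    sum_le_of_add_eq_two_mul_add (by simpa using hN) (fun i => wydObs ρ α (A i))
      (fun p => wydObs ρ α (A p.1 + c • A p.2)) (fun p => wydObs ρ α (A p.1 - c • A p.2))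
      (fun p _ => wydObs_nonneg hρ hα0.le hα1.le ((hA p.1).add ((hA p.2).smul hc_self)))
      (fun p _ => by rw [wydObs_add_add_wydObs_sub, wydObs_smul_of_sq_eq_one ρ α hc])

theorem wyd_skew_information_uncertainty (d N : ℕ) (hN : 2 ≤ N)
    (ρ : Matrix (Fin d) (Fin d) ℂ) (hρ : ρ.PosSemidef) (hTr : ρ.trace = 1)
    (α : ℝ) (hα0 : 0 < α) (hα1 : α < 1)
    (A : Fin N → Matrix (Fin d) (Fin d) ℂ) (hA : ∀ i, (A i).IsHermitian) :
    ∀ x ∈ ({0, 1} : Set ℕ),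
      ∑ i, wydObs ρ α (A i) ≥
        (1 / (2 * (N : ℝ) - 2)) *
          ((2 / ((N : ℝ) * ((N : ℝ) - 1))) *
              (∑ p ∈ univ.filter (fun p : Fin N × Fin N => p.1 < p.2),
                Real.sqrt (wydObs ρ α (A p.1 + ((-1 : ℂ) ^ x) • A p.2))) ^ 2 +
            ∑ p ∈ univ.filter (fun p : Fin N × Fin N => p.1 < p.2),
              wydObs ρ α (A p.1 + ((-1 : ℂ) ^ (x + 1)) • A p.2)) :=
  wyd_skew_information_uncertainty_general d N hN ρ hρ α hα0 hα1 A hA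
end

section
/- Let ρ be a d×d complex positive definite matrix with trace 1 and let A_1, …, A_N (N ≥ 2) be d×d Hermitian matrices. Suppose that for each i a Hermitian matrix L_i satisfies i[ρ, A_i] = (1/2)(L_i ρ + ρ L_i), and for each pair i < j and each sign ± a Hermitian matrix L_{ij}^± satisfies i[ρ, A_i ± A_j] = (1/2)(L_{ij}^± ρ + ρ L_{ij}^±). Define I^F_ρ(A_i) = (1/4) Tr(ρ (L_i)²) and I^F_ρ(A_i ± A_j) = (1/4) Tr(ρ (L_{ij}^±)²). Then: ∑_{i=1}^N I^F_ρ(A_i) ≥ (1/(2N − 2)) · [ (2/(N(N − 1))) · (∑_{1 ≤ i < j ≤ N} √(I^F_ρ(A_i + A_j)))² + ∑_{1 ≤ i < j ≤ N} I^F_ρ(A_i − A_j) ], and also ∑_{i=1}^N I^F_ρ(A_i) ≥ (1/(2N − 2)) · [ (2/(N(N − 1))) · (∑_{1 ≤ i < j ≤ N} √(I^F_ρ(A_i − A_j)))² + ∑_{1 ≤ i < j ≤ N} I^F_ρ(A_i + A_j) ], where √ denotes the real square root. -/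
/-!
The SLD equation pins down `Tr(ρ L²)`: if `L` and `L'` are SLDs of the same `X`, then
`D = L' - L` satisfies `Dρ + ρD = 0`, so the cross terms `Tr(ρ(LD + DL)) = Tr(L(Dρ + ρD))` and
`Tr(ρD²)` vanish. As `L_i ± L_j` is an SLD of `A_i ± A_j`, this gives the parallelogram law
`I(A_i + A_j) + I(A_i - A_j) = 2 I(A_i) + 2 I(A_j)`. Summed over the `N(N-1)/2` pairs it reads
`∑_{i<j} (I(A_i + A_j) + I(A_i - A_j)) = (2N - 2) ∑ I(A_i)`, and Cauchy–Schwarz bounds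
`(∑_{i<j} √I(A_i ± A_j))²` by `N(N-1)/2 · ∑_{i<j} I(A_i ± A_j)`.
-/

open Matrix Finset
open scoped ComplexOrder

/-- The quantum Fisher information `I^F_ρ = (1/4) Tr(ρ L²)` computed from a
symmetric logarithmic derivative `L`. -/
noncomputable def fisherInfo {d : ℕ} (ρ L : Matrix (Fin d) (Fin d) ℂ) : ℝ :=
  ((1 / 4 : ℂ) * (ρ * (L * L)).trace).re

section SLD

variable {n : Type*} [Fintype n]

def IsSLD (ρ X L : Matrix n n ℂ) : Prop :=
  Complex.I • (ρ * X - X * ρ) = (1 / 2 : ℂ) • (L * ρ + ρ * L)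

lemma IsSLD.add {ρ X Y L M : Matrix n n ℂ} (hX : IsSLD ρ X L) (hY : IsSLD ρ Y M) :
    IsSLD ρ (X + Y) (L + M) := by
  unfold IsSLD at *
  rw [show ρ * (X + Y) - (X + Y) * ρ = (ρ * X - X * ρ) + (ρ * Y - Y * ρ) by noncomm_ring,
    show (L + M) * ρ + ρ * (L + M) = (L * ρ + ρ * L) + (M * ρ + ρ * M) by noncomm_ring]
  linear_combination (norm := module) hX + hY

lemma IsSLD.sub {ρ X Y L M : Matrix n n ℂ} (hX : IsSLD ρ X L) (hY : IsSLD ρ Y M) :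
    IsSLD ρ (X - Y) (L - M) := by
  unfold IsSLD at *
  rw [show ρ * (X - Y) - (X - Y) * ρ = (ρ * X - X * ρ) - (ρ * Y - Y * ρ) by noncomm_ring,
    show (L - M) * ρ + ρ * (L - M) = (L * ρ + ρ * L) - (M * ρ + ρ * M) by noncomm_ring]
  linear_combination (norm := module) hX - hY

lemma IsSLD.anticomm_sub_eq_zero {ρ X L L' : Matrix n n ℂ} (hL : IsSLD ρ X L)
    (hL' : IsSLD ρ X L') : (L' - L) * ρ + ρ * (L' - L) = 0 := by
  have h : (1 / 2 : ℂ) • ((L' - L) * ρ + ρ * (L' - L)) = 0 := by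
    rw [show (L' - L) * ρ + ρ * (L' - L) = (L' * ρ + ρ * L') - (L * ρ + ρ * L) by noncomm_ring,
      smul_sub, ← hL, ← hL', sub_self]
  exact (smul_eq_zero.mp h).resolve_left (by norm_num)

lemma trace_mul_anticomm (ρ L D : Matrix n n ℂ) :
    (ρ * (L * D)).trace + (ρ * (D * L)).trace = (L * (D * ρ + ρ * D)).trace := by
  rw [trace_mul_comm ρ, Matrix.mul_assoc, ← Matrix.mul_assoc ρ, trace_mul_comm (ρ * D),
    ← trace_add, ← Matrix.mul_add]

lemma trace_mul_mul_self_add_of_anticomm_eq_zero {ρ L D : Matrix n n ℂ}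
    (hD : D * ρ + ρ * D = 0) :
    (ρ * ((L + D) * (L + D))).trace = (ρ * (L * L)).trace := by
  have hLD := trace_mul_anticomm ρ L D
  have hDD := trace_mul_anticomm ρ D D
  rw [hD, Matrix.mul_zero, trace_zero] at hLD hDD
  rw [show ρ * ((L + D) * (L + D)) = ρ * (L * L) + ρ * (L * D) + ρ * (D * L) + ρ * (D * D) by
    noncomm_ring]
  simp only [trace_add]
  linear_combination hLD + hDD / 2

lemma IsSLD.trace_mul_mul_self_eq {ρ X L L' : Matrix n n ℂ} (hL : IsSLD ρ X L)
    (hL' : IsSLD ρ X L') : (ρ * (L' * L')).trace = (ρ * (L * L)).trace := by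
  simpa using trace_mul_mul_self_add_of_anticomm_eq_zero (L := L) (hL.anticomm_sub_eq_zero hL')

end SLD

lemma fisherInfo_add_add_fisherInfo_sub {d : ℕ} (ρ L M : Matrix (Fin d) (Fin d) ℂ) :
    fisherInfo ρ (L + M) + fisherInfo ρ (L - M) = 2 * fisherInfo ρ L + 2 * fisherInfo ρ M := by
  have h : (ρ * ((L + M) * (L + M))).trace + (ρ * ((L - M) * (L - M))).trace
      = 2 * (ρ * (L * L)).trace + 2 * (ρ * (M * M)).trace := by
    rw [← trace_add, show ρ * ((L + M) * (L + M)) + ρ * ((L - M) * (L - M))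
      = (2 : ℂ) • (ρ * (L * L)) + (2 : ℂ) • (ρ * (M * M)) by simp only [two_smul]; noncomm_ring,
      trace_add, trace_smul, trace_smul, smul_eq_mul, smul_eq_mul]
  have h' := congrArg Complex.re h
  simp only [Complex.add_re, Complex.mul_re] at h'
  norm_num at h'
  simp only [fisherInfo, Complex.mul_re]
  norm_num
  linarith

lemma IsSLD.fisherInfo_eq {d : ℕ} {ρ X L L' : Matrix (Fin d) (Fin d) ℂ} (hL : IsSLD ρ X L)
    (hL' : IsSLD ρ X L') : fisherInfo ρ L' = fisherInfo ρ L := by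
  rw [fisherInfo, hL.trace_mul_mul_self_eq hL', fisherInfo]

lemma IsSLD.fisherInfo_add_add_fisherInfo_sub {d : ℕ} {ρ X Y L M P Q : Matrix (Fin d) (Fin d) ℂ}
    (hX : IsSLD ρ X L) (hY : IsSLD ρ Y M) (hP : IsSLD ρ (X + Y) P) (hQ : IsSLD ρ (X - Y) Q) :
    fisherInfo ρ P + fisherInfo ρ Q = 2 * fisherInfo ρ L + 2 * fisherInfo ρ M := by
  rw [(hX.add hY).fisherInfo_eq hP, (hX.sub hY).fisherInfo_eq hQ,
    _root_.fisherInfo_add_add_fisherInfo_sub]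

lemma fisherInfo_nonneg {d : ℕ} {ρ L : Matrix (Fin d) (Fin d) ℂ} (hρ : ρ.PosSemidef)
    (hL : L.IsHermitian) : 0 ≤ fisherInfo ρ L := by
  have htr : (ρ * (L * L)).trace = (Lᴴ * ρ * L).trace := by
    rw [hL.eq, trace_mul_comm, Matrix.mul_assoc, trace_mul_comm]
  have h0 : 0 ≤ (ρ * (L * L)).trace := htr ▸ (hρ.conjTranspose_mul_mul_same L).trace_nonneg
  simp only [fisherInfo, Complex.mul_re]
  norm_num
  exact (Complex.nonneg_iff.mp h0).1

lemma sum_filter_fst_lt_snd_add {ι M : Type*} [Fintype ι] [LinearOrder ι] [AddCommMonoid M]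
    (f : ι → M) :
    ∑ p ∈ univ.filter (fun p : ι × ι => p.1 < p.2), (f p.1 + f p.2)
      = (Fintype.card ι - 1) • ∑ i, f i := by
  have hswap : ∑ p ∈ univ.filter (fun p : ι × ι => p.1 < p.2), f p.2
      = ∑ p ∈ univ.filter (fun p : ι × ι => p.2 < p.1), f p.1 :=
    sum_equiv (Equiv.prodComm ι ι) (by simp) (by simp)
  have hne : univ.filter (fun p : ι × ι => p.1 < p.2) ∪ univ.filter (fun p : ι × ι => p.2 < p.1)
      = univ.filter (fun p : ι × ι => p.1 ≠ p.2) := by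
    rw [← filter_or]; simp only [ne_iff_lt_or_gt]
  rw [sum_add_distrib, hswap, ← sum_union (disjoint_filter.mpr fun p _ h h' => lt_asymm h h'),
    hne, sum_filter, Fintype.sum_prod_type, smul_sum]
  refine sum_congr rfl fun i _ => ?_
  rw [← sum_filter]
  dsimp only
  rw [sum_const, filter_ne, card_erase_of_mem (mem_univ i), card_univ]

lemma card_filter_fst_lt_snd_mul_two (ι : Type*) [Fintype ι] [LinearOrder ι] :
    #(univ.filter (fun p : ι × ι => p.1 < p.2)) * 2 = Fintype.card ι * (Fintype.card ι - 1) := by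
  have h := sum_filter_fst_lt_snd_add (fun _ : ι => (1 : ℕ))
  simp only [Nat.reduceAdd, sum_const, smul_eq_mul, card_univ, mul_one] at h
  rw [h, mul_comm]

lemma le_of_sum_filter_fst_lt_snd {ι : Type*} [Fintype ι] [LinearOrder ι]
    (hι : 2 ≤ Fintype.card ι) {F : ℝ} {P M : ι × ι → ℝ}
    (hP : ∀ p ∈ univ.filter (fun p : ι × ι => p.1 < p.2), 0 ≤ P p)
    (hF : ∑ p ∈ univ.filter (fun p : ι × ι => p.1 < p.2), P p
        + ∑ p ∈ univ.filter (fun p : ι × ι => p.1 < p.2), M p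
      = (2 * (Fintype.card ι : ℝ) - 2) * F) :
    F ≥ (1 / (2 * (Fintype.card ι : ℝ) - 2)) *
      ((2 / ((Fintype.card ι : ℝ) * ((Fintype.card ι : ℝ) - 1))) *
          (∑ p ∈ univ.filter (fun p : ι × ι => p.1 < p.2), Real.sqrt (P p)) ^ 2 +
        ∑ p ∈ univ.filter (fun p : ι × ι => p.1 < p.2), M p) := by
  set S := univ.filter (fun p : ι × ι => p.1 < p.2)
  have hc : (2 : ℝ) ≤ Fintype.card ι := by exact_mod_cast hι
  set c : ℝ := (Fintype.card ι : ℝ)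
  have hcard : (#S : ℝ) = c * (c - 1) / 2 := by
    have h := congrArg (Nat.cast (R := ℝ)) (card_filter_fst_lt_snd_mul_two ι)
    push_cast [Nat.cast_sub (by omega : 1 ≤ Fintype.card ι)] at h
    linarith
  have hCS : (∑ p ∈ S, Real.sqrt (P p)) ^ 2 ≤ #S * ∑ p ∈ S, P p := by
    simpa only [sum_congr rfl fun p hp => Real.sq_sqrt (hP p hp)] using
      sq_sum_le_card_mul_sum_sq (s := S) (f := fun p => Real.sqrt (P p))
  rw [hcard] at hCS
  rw [ge_iff_le, div_mul_eq_mul_div, one_mul, div_le_iff₀ (by linarith), mul_comm F, ← hF,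
    div_mul_eq_mul_div]
  gcongr ?_ + _
  rw [div_le_iff₀ (by nlinarith)]
  linarith

theorem fisher_information_uncertainty_general (d N : ℕ) (hN : 2 ≤ N)
    (ρ : Matrix (Fin d) (Fin d) ℂ) (hρ : ρ.PosDef)
    (A : Fin N → Matrix (Fin d) (Fin d) ℂ)
    -- SLDs for the individual observables
    (L : Fin N → Matrix (Fin d) (Fin d) ℂ)
    (hLeq : ∀ i, Complex.I • (ρ * A i - A i * ρ)
      = (1 / 2 : ℂ) • (L i * ρ + ρ * L i))
    -- SLDs for the sums `A i + A j` and the differences `A i − A j`, `i < j`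
    (LP LM : Fin N → Fin N → Matrix (Fin d) (Fin d) ℂ)
    (hLP : ∀ i j, i < j → (LP i j).IsHermitian)
    (hLPeq : ∀ i j, i < j → Complex.I • (ρ * (A i + A j) - (A i + A j) * ρ)
      = (1 / 2 : ℂ) • (LP i j * ρ + ρ * LP i j))
    (hLM : ∀ i j, i < j → (LM i j).IsHermitian)
    (hLMeq : ∀ i j, i < j → Complex.I • (ρ * (A i - A j) - (A i - A j) * ρ)
      = (1 / 2 : ℂ) • (LM i j * ρ + ρ * LM i j)) :
    (∑ i, fisherInfo ρ (L i) ≥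
      (1 / (2 * (N : ℝ) - 2)) *
        ((2 / ((N : ℝ) * ((N : ℝ) - 1))) *
            (∑ p ∈ univ.filter (fun p : Fin N × Fin N => p.1 < p.2),
              Real.sqrt (fisherInfo ρ (LP p.1 p.2))) ^ 2 +
          ∑ p ∈ univ.filter (fun p : Fin N × Fin N => p.1 < p.2),
            fisherInfo ρ (LM p.1 p.2)))
    ∧
    (∑ i, fisherInfo ρ (L i) ≥
      (1 / (2 * (N : ℝ) - 2)) *
        ((2 / ((N : ℝ) * ((N : ℝ) - 1))) *
            (∑ p ∈ univ.filter (fun p : Fin N × Fin N => p.1 < p.2),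
              Real.sqrt (fisherInfo ρ (LM p.1 p.2))) ^ 2 +
          ∑ p ∈ univ.filter (fun p : Fin N × Fin N => p.1 < p.2),
            fisherInfo ρ (LP p.1 p.2))) := by
  set S := univ.filter (fun p : Fin N × Fin N => p.1 < p.2)
  have hpair : ∀ p ∈ S, fisherInfo ρ (LP p.1 p.2) + fisherInfo ρ (LM p.1 p.2)
      = 2 * fisherInfo ρ (L p.1) + 2 * fisherInfo ρ (L p.2) := fun p hp =>
    have hlt := (mem_filter.mp hp).2
    IsSLD.fisherInfo_add_add_fisherInfo_sub (hLeq _) (hLeq _) (hLPeq _ _ hlt) (hLMeq _ _ hlt)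
  have hsum : ∑ p ∈ S, fisherInfo ρ (LP p.1 p.2) + ∑ p ∈ S, fisherInfo ρ (LM p.1 p.2)
      = (2 * (Fintype.card (Fin N) : ℝ) - 2) * ∑ i, fisherInfo ρ (L i) := by
    rw [← sum_add_distrib, sum_congr rfl hpair,
      sum_filter_fst_lt_snd_add fun i => 2 * fisherInfo ρ (L i), nsmul_eq_mul, ← mul_sum,
      Nat.cast_sub (by rw [Fintype.card_fin]; omega)]
    ring
  have hnonneg : ∀ L' : Fin N → Fin N → Matrix (Fin d) (Fin d) ℂ,
      (∀ i j, i < j → (L' i j).IsHermitian) → ∀ p ∈ S, 0 ≤ fisherInfo ρ (L' p.1 p.2) :=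
    fun L' hL' p hp => fisherInfo_nonneg hρ.posSemidef (hL' _ _ (mem_filter.mp hp).2)
  have hN' : 2 ≤ Fintype.card (Fin N) := by simpa using hN
  constructor
  · simpa using le_of_sum_filter_fst_lt_snd hN' (hnonneg LP hLP) hsum
  · simpa using le_of_sum_filter_fst_lt_snd hN' (hnonneg LM hLM) ((add_comm _ _).trans hsum)

theorem fisher_information_uncertainty (d N : ℕ) (hN : 2 ≤ N)
    (ρ : Matrix (Fin d) (Fin d) ℂ) (hρ : ρ.PosDef) (hTr : ρ.trace = 1)
    (A : Fin N → Matrix (Fin d) (Fin d) ℂ) (hA : ∀ i, (A i).IsHermitian)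
    -- SLDs for the individual observables
    (L : Fin N → Matrix (Fin d) (Fin d) ℂ) (hL : ∀ i, (L i).IsHermitian)
    (hLeq : ∀ i, Complex.I • (ρ * A i - A i * ρ)
      = (1 / 2 : ℂ) • (L i * ρ + ρ * L i))
    -- SLDs for the sums `A i + A j` and the differences `A i − A j`, `i < j`
    (LP LM : Fin N → Fin N → Matrix (Fin d) (Fin d) ℂ)
    (hLP : ∀ i j, i < j → (LP i j).IsHermitian)
    (hLPeq : ∀ i j, i < j → Complex.I • (ρ * (A i + A j) - (A i + A j) * ρ)
      = (1 / 2 : ℂ) • (LP i j * ρ + ρ * LP i j))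
    (hLM : ∀ i j, i < j → (LM i j).IsHermitian)
    (hLMeq : ∀ i j, i < j → Complex.I • (ρ * (A i - A j) - (A i - A j) * ρ)
      = (1 / 2 : ℂ) • (LM i j * ρ + ρ * LM i j)) :
    (∑ i, fisherInfo ρ (L i) ≥
      (1 / (2 * (N : ℝ) - 2)) *
        ((2 / ((N : ℝ) * ((N : ℝ) - 1))) *
            (∑ p ∈ univ.filter (fun p : Fin N × Fin N => p.1 < p.2),
              Real.sqrt (fisherInfo ρ (LP p.1 p.2))) ^ 2 +
          ∑ p ∈ univ.filter (fun p : Fin N × Fin N => p.1 < p.2),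
            fisherInfo ρ (LM p.1 p.2)))
    ∧
    (∑ i, fisherInfo ρ (L i) ≥
      (1 / (2 * (N : ℝ) - 2)) *
        ((2 / ((N : ℝ) * ((N : ℝ) - 1))) *
            (∑ p ∈ univ.filter (fun p : Fin N × Fin N => p.1 < p.2),
              Real.sqrt (fisherInfo ρ (LM p.1 p.2))) ^ 2 +
          ∑ p ∈ univ.filter (fun p : Fin N × Fin N => p.1 < p.2),
            fisherInfo ρ (LP p.1 p.2))) :=
  fisher_information_uncertainty_general d N hN ρ hρ A L hLeq LP LM hLP hLPeq hLM hLMeq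
end
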